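/- Let G be an edge-weighted graph, C a pending cycle in G with u ∈ C the (only possible) vertex of degree at least 3 in G. Let G' be obtained by removing all of C except u and adding a fresh vertex z with edge uz of weight ω(C) - ω(C - u), where ω(C) and ω(C - u) denote maximum matching weights of the cycle C and the path C - u, respectively. Then ω(G') = ω(G) - ω(C - u). -/

import Mathlib

/-- A matching in a simple graph `G`, given as a finite set of edges of `G`
that are pairwise vertex-disjoint. -/
def IsMatching {V : Type*} (G : SimpleGraph V) (M : Finset (Sym2 V)) : Prop :=
  (∀ e ∈ M, e ∈ G.edgeSet) ∧
    ∀ e ∈ M, ∀ f ∈ M, e ≠ f → ∀ v, v ∈ e → v ∉ f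

/-- The maximum weight of a matching in `G` with edge weights `w`. -/
noncomputable def wmax {V : Type*} (G : SimpleGraph V) (w : Sym2 V → ℕ) : ℕ :=
  sSup {n | ∃ M : Finset (Sym2 V), IsMatching G M ∧ ∑ e ∈ M, w e = n}

/-- The graph obtained from `G` by deleting the vertices in `S`. -/
def deleteVerts {V : Type*} (G : SimpleGraph V) (S : Set V) : SimpleGraph V where
  Adj a b := G.Adj a b ∧ a ∉ S ∧ b ∉ S
  symm := ⟨fun _ _ ⟨h, ha, hb⟩ => ⟨h.symm, hb, ha⟩⟩
  loopless := ⟨fun a ⟨h, _, _⟩ => G.loopless.irrefl a h⟩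

/-- The cycle graph on the vertices `c 0, c 1, …, c (n-1)` (taken cyclically). -/
def cycleOn {V : Type*} (n : ℕ) (c : ℕ → V) : SimpleGraph V :=
  SimpleGraph.fromEdgeSet {e | ∃ i < n, e = s(c i, c ((i + 1) % n))}

/-- The graph obtained from `G` by removing all vertices of the cycle
`c 0, …, c (n-1)` except `u = c 0`, and adding a fresh vertex `z` (`none`)
joined to `u` by an edge. -/
def cycleReduced {V : Type*} (G : SimpleGraph V) (n : ℕ) (c : ℕ → V) (u : V) :
    SimpleGraph (Option V) where
  Adj a b :=
    match a, b with
    | some a, some b =>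
        G.Adj a b ∧ (∀ i < n, c i = a → a = u) ∧ (∀ i < n, c i = b → b = u)
    | some a, none => a = u
    | none, some b => b = u
    | none, none => False
  symm := by
    constructor
    rintro (_ | a) (_ | b) h
    · exact h.elim
    · exact h
    · exact h
    · obtain ⟨h1, h2, h3⟩ := h
      exact ⟨h1.symm, h3, h2⟩
  loopless := by
    constructor
    rintro (_ | a) h
    · exact h.elim
    · exact G.loopless.irrefl a h.1

/-!
Write `H` for `G` with the cycle vertices other than `u` deleted. Every edge of `G` at such a
vertex lies on `C`, so a matching of `G` splits into a matching of `H` and one of `C`, and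
conversely two such matchings combine as long as they do not both cover `u`. Hence
`ω(G) = max (ω(H) + ω(C - u)) (ω(H - u) + ω(C))`. In the same way, a pendant edge `uz` of
weight `t` gives `ω(H + uz) = max ω(H) (ω(H - u) + t)`, and for `t = ω(C) - ω(C - u)` the two
maxima differ by exactly `ω(C - u)`.
-/

section Matching

variable {V W : Type*} {G H : SimpleGraph V} {M N : Finset (Sym2 V)}

lemma mem_deleteVerts_edgeSet {S : Set V} {e : Sym2 V} :
    e ∈ (deleteVerts G S).edgeSet ↔ e ∈ G.edgeSet ∧ ∀ v ∈ e, v ∉ S := by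
  induction e with
  | h a b => simp [deleteVerts]

lemma deleteVerts_le (G : SimpleGraph V) (S : Set V) : deleteVerts G S ≤ G :=
  fun _ _ h => h.1

lemma IsMatching.of_subset (hM : IsMatching G M) (hNM : N ⊆ M)
    (hN : ∀ e ∈ N, e ∈ H.edgeSet) : IsMatching H N :=
  ⟨hN, fun e he f hf => hM.2 e (hNM he) f (hNM hf)⟩

lemma IsMatching.mono (hM : IsMatching G M) (hGH : G ≤ H) : IsMatching H M :=
  ⟨fun e he => SimpleGraph.edgeSet_mono hGH (hM.1 e he), hM.2⟩

lemma isMatching_singleton {e : Sym2 V} (he : e ∈ G.edgeSet) : IsMatching G {e} :=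
  ⟨by simpa using he, by simp⟩

lemma mem_support_of_mem_edgeSet {e : Sym2 V} (he : e ∈ G.edgeSet) {v : V} (hv : v ∈ e) :
    v ∈ G.support := by
  induction e with
  | h a b =>
    rcases Sym2.mem_iff.1 hv with rfl | rfl
    exacts [he.mem_support_left, he.mem_support_right]

lemma disjoint_of_vertexDisjoint (h : ∀ e ∈ M, ∀ f ∈ N, ∀ v ∈ e, v ∉ f) : Disjoint M N :=
  Finset.disjoint_left.2 fun e he hf => h e he e hf _ (Sym2.out_fst_mem e) (Sym2.out_fst_mem e)

lemma IsMatching.union [DecidableEq V] (hM : IsMatching G M) (hN : IsMatching G N)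
    (h : ∀ e ∈ M, ∀ f ∈ N, ∀ v ∈ e, v ∉ f) : IsMatching G (M ∪ N) := by
  refine ⟨fun e he => (Finset.mem_union.1 he).elim (hM.1 e) (hN.1 e), ?_⟩
  intro e he f hf hef v hve hvf
  rcases Finset.mem_union.1 he with he | he <;> rcases Finset.mem_union.1 hf with hf | hf
  · exact hM.2 e he f hf hef v hve hvf
  · exact h e he f hf v hve hvf
  · exact h f hf e he v hvf hve
  · exact hN.2 e he f hf hef v hve hvf

lemma IsMatching.image [DecidableEq W] {H : SimpleGraph W} (φ : G →g H)
    (hφ : Function.Injective φ) (hM : IsMatching G M) : IsMatching H (M.image (Sym2.map φ)) := by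
  refine ⟨?_, ?_⟩
  · simp only [Finset.mem_image]
    rintro _ ⟨e, he, rfl⟩
    exact φ.map_mem_edgeSet (hM.1 e he)
  · simp only [Finset.mem_image]
    rintro _ ⟨e, he, rfl⟩ _ ⟨f, hf, rfl⟩ hef _ hv hv'
    obtain ⟨a, ha, rfl⟩ := Sym2.mem_map.1 hv
    obtain ⟨b, hb, hab⟩ := Sym2.mem_map.1 hv'
    rw [hφ hab] at hb
    exact hM.2 e he f hf (fun h => hef (h ▸ rfl)) a ha hb

lemma IsMatching.preimage {H : SimpleGraph W} (φ : G ↪g H) {M : Finset (Sym2 W)}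
    (hM : IsMatching H M) :
    IsMatching G (M.preimage (Sym2.map φ) (Sym2.map.injective φ.injective).injOn) := by
  refine ⟨fun e he => ?_, fun e he f hf hef v hve hvf => ?_⟩
  · rw [Finset.mem_preimage] at he
    induction e with
    | h a b => simpa using hM.1 _ he
  · rw [Finset.mem_preimage] at he hf
    exact hM.2 _ he _ hf (fun h => hef (Sym2.map.injective φ.injective h)) (φ v)
      (Sym2.mem_map.2 ⟨v, hve, rfl⟩) (Sym2.mem_map.2 ⟨v, hvf, rfl⟩)

end Matching

section MaxWeight

variable {V : Type*} {G H : SimpleGraph V} (w : Sym2 V → ℕ)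

lemma matchingWeights_nonempty (G : SimpleGraph V) :
    {n | ∃ M : Finset (Sym2 V), IsMatching G M ∧ ∑ e ∈ M, w e = n}.Nonempty :=
  ⟨0, ∅, ⟨by simp, by simp⟩, by simp⟩

lemma matchingWeights_bddAbove [Fintype V] (G : SimpleGraph V) :
    BddAbove {n | ∃ M : Finset (Sym2 V), IsMatching G M ∧ ∑ e ∈ M, w e = n} := by
  classical
  refine ⟨∑ e, w e, ?_⟩
  rintro _ ⟨M, -, rfl⟩
  exact Finset.sum_le_sum_of_subset (Finset.subset_univ M)

lemma wmax_le {w} {b : ℕ} (h : ∀ M, IsMatching G M → ∑ e ∈ M, w e ≤ b) : wmax G w ≤ b :=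
  csSup_le (matchingWeights_nonempty w G) (by rintro _ ⟨M, hM, rfl⟩; exact h M hM)

variable [Fintype V]

lemma le_wmax {w} {M : Finset (Sym2 V)} (hM : IsMatching G M) : ∑ e ∈ M, w e ≤ wmax G w :=
  le_csSup (matchingWeights_bddAbove w G) ⟨M, hM, rfl⟩

lemma exists_isMatching_sum_eq_wmax (G : SimpleGraph V) :
    ∃ M, IsMatching G M ∧ ∑ e ∈ M, w e = wmax G w :=
  Nat.sSup_mem (matchingWeights_nonempty w G) (matchingWeights_bddAbove w G)

lemma wmax_mono (hGH : G ≤ H) : wmax G w ≤ wmax H w :=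
  wmax_le fun _ hM => le_wmax (hM.mono hGH)

lemma wmax_add_wmax_le {G₁ G₂ : SimpleGraph V} (h₁ : G₁ ≤ G) (h₂ : G₂ ≤ G)
    (hdisj : Disjoint G₁.support G₂.support) : wmax G₁ w + wmax G₂ w ≤ wmax G w := by
  classical
  obtain ⟨M₁, hM₁, hw₁⟩ := exists_isMatching_sum_eq_wmax w G₁
  obtain ⟨M₂, hM₂, hw₂⟩ := exists_isMatching_sum_eq_wmax w G₂
  have hvert : ∀ e ∈ M₁, ∀ f ∈ M₂, ∀ v ∈ e, v ∉ f := fun e he f hf v hve hvf =>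
    Set.disjoint_left.1 hdisj (mem_support_of_mem_edgeSet (hM₁.1 e he) hve)
      (mem_support_of_mem_edgeSet (hM₂.1 f hf) hvf)
  calc wmax G₁ w + wmax G₂ w = ∑ e ∈ M₁ ∪ M₂, w e := by
        rw [Finset.sum_union (disjoint_of_vertexDisjoint hvert), hw₁, hw₂]
    _ ≤ wmax G w := le_wmax ((hM₁.mono h₁).union (hM₂.mono h₂) hvert)

end MaxWeight

section Pendant

variable {V : Type*}

def addPendant (K : SimpleGraph V) (u : V) : SimpleGraph (Option V) where
  Adj a b :=
    match a, b with
    | some a, some b => K.Adj a b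
    | some a, none => a = u
    | none, some b => b = u
    | none, none => False
  symm := by
    constructor
    rintro (_ | a) (_ | b) h
    exacts [h.elim, h, h, h.symm]
  loopless := by
    constructor
    rintro (_ | a) h
    exacts [h.elim, K.loopless.irrefl a h]

def embeddingAddPendant (K : SimpleGraph V) (u : V) : K ↪g addPendant K u where
  toFun := some
  inj' := Option.some_injective V
  map_rel_iff' := Iff.rfl

@[simp]
lemma coe_embeddingAddPendant (K : SimpleGraph V) (u : V) : ⇑(embeddingAddPendant K u) = some :=
  rfl

lemma pendantEdge_mem_edgeSet (K : SimpleGraph V) (u : V) :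
    s(some u, none) ∈ (addPendant K u).edgeSet :=
  rfl

lemma eq_pendantEdge_of_notMem_range {K : SimpleGraph V} {u : V} {e : Sym2 (Option V)}
    (he : e ∈ (addPendant K u).edgeSet) (hrange : e ∉ Set.range (Sym2.map some)) :
    e = s(some u, none) := by
  induction e with
  | h a b =>
    rcases a with _ | a <;> rcases b with _ | b
    · exact he.elim
    · rw [show b = u from he, Sym2.eq_swap]
    · rw [show a = u from he]
    · exact (hrange ⟨s(a, b), rfl⟩).elim

variable [DecidableEq V]

def pendantWeight (w : Sym2 V → ℕ) (u : V) (t : ℕ) : Sym2 (Option V) → ℕ :=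
  fun e => if (none : Option V) ∈ e then t else w (e.map fun o => o.getD u)

@[simp]
lemma pendantWeight_pendantEdge (w : Sym2 V → ℕ) (u : V) (t : ℕ) :
    pendantWeight w u t s(some u, none) = t := by
  simp [pendantWeight]

@[simp]
lemma pendantWeight_map_some (w : Sym2 V → ℕ) (u : V) (t : ℕ) (e : Sym2 V) :
    pendantWeight w u t (e.map some) = w e := by
  induction e with
  | h a b => simp [pendantWeight]

variable [Fintype V] (K : SimpleGraph V) (u : V) (w : Sym2 V → ℕ) (t : ℕ)

lemma wmax_addPendant_le :
    wmax (addPendant K u) (pendantWeight w u t) ≤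
      max (wmax K w) (wmax (deleteVerts K {u}) w + t) := by
  classical
  refine wmax_le fun M' hM' => ?_
  have hinj : Set.InjOn (Sym2.map some) (Sym2.map some ⁻¹' ↑M') :=
    (Sym2.map.injective (Option.some_injective V)).injOn
  set M := M'.preimage (Sym2.map some) hinj
  have hM : IsMatching K M := hM'.preimage (embeddingAddPendant K u)
  have hsplit : ∑ e ∈ M', pendantWeight w u t e =
      ∑ e ∈ M, w e + ∑ e ∈ M' with e ∉ Set.range (Sym2.map some), pendantWeight w u t e := by
    rw [← Finset.sum_filter_add_sum_filter_not M' (· ∈ Set.range (Sym2.map some)),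
      ← Finset.sum_preimage' _ _ hinj]
    simp [M]
  have hrest : {e ∈ M' | e ∉ Set.range (Sym2.map some)} ⊆ {s(some u, none)} := fun e he => by
    rw [Finset.mem_filter] at he
    exact Finset.mem_singleton.2 (eq_pendantEdge_of_notMem_range (hM'.1 e he.1) he.2)
  rcases Finset.subset_singleton_iff.1 hrest with hempty | hpendant
  · rw [hsplit, hempty, Finset.sum_empty, add_zero]
    exact le_max_of_le_left (le_wmax hM)
  · have huz := Finset.mem_filter.1 (hpendant ▸ Finset.mem_singleton_self _)
    have hMu : IsMatching (deleteVerts K {u}) M := by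
      refine hM.of_subset subset_rfl fun e he => mem_deleteVerts_edgeSet.2 ⟨hM.1 e he, ?_⟩
      rintro v hv rfl
      exact hM'.2 _ (Finset.mem_preimage.1 he) _ huz.1 (fun h => huz.2 ⟨e, h⟩) (some v)
        (Sym2.mem_map.2 ⟨v, hv, rfl⟩) (Sym2.mem_mk_left _ _)
    rw [hsplit, hpendant, Finset.sum_singleton, pendantWeight_pendantEdge]
    exact le_max_of_le_right (Nat.add_le_add_right (le_wmax hMu) t)

lemma le_wmax_addPendant :
    max (wmax K w) (wmax (deleteVerts K {u}) w + t) ≤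
      wmax (addPendant K u) (pendantWeight w u t) := by
  set φ := embeddingAddPendant K u
  have hsum (M : Finset (Sym2 V)) :
      ∑ e ∈ M.image (Sym2.map φ), pendantWeight w u t e = ∑ e ∈ M, w e := by
    rw [Finset.sum_image fun _ _ _ _ h => Sym2.map.injective φ.injective h]
    simp [φ]
  refine max_le ?_ ?_
  · obtain ⟨M, hM, hMw⟩ := exists_isMatching_sum_eq_wmax w K
    rw [← hMw, ← hsum]
    exact le_wmax (hM.image φ.toHom φ.injective)
  · obtain ⟨M, hM, hMw⟩ := exists_isMatching_sum_eq_wmax w (deleteVerts K {u})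
    have hvert : ∀ e ∈ M.image (Sym2.map φ), ∀ f ∈ ({s(some u, none)} : Finset _),
        ∀ v ∈ e, v ∉ f := by
      simp only [Finset.mem_image, Finset.mem_singleton]
      rintro _ ⟨e, he, rfl⟩ _ rfl v hv hvf
      obtain ⟨a, ha, rfl⟩ := Sym2.mem_map.1 hv
      have hau : a = u := by simpa [φ] using hvf
      exact (mem_deleteVerts_edgeSet.1 (hM.1 e he)).2 a ha hau
    calc wmax (deleteVerts K {u}) w + t
        = ∑ e ∈ M.image (Sym2.map φ) ∪ {s(some u, none)}, pendantWeight w u t e := by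
          rw [Finset.sum_union (disjoint_of_vertexDisjoint hvert), hsum, Finset.sum_singleton,
            pendantWeight_pendantEdge, hMw]
      _ ≤ _ := le_wmax (((hM.mono (deleteVerts_le K {u})).image φ.toHom φ.injective).union
          (isMatching_singleton (pendantEdge_mem_edgeSet K u)) hvert)

theorem wmax_addPendant :
    wmax (addPendant K u) (pendantWeight w u t) =
      max (wmax K w) (wmax (deleteVerts K {u}) w + t) :=
  (wmax_addPendant_le K u w t).antisymm (le_wmax_addPendant K u w t)

end Pendant

section Pending

variable {V : Type*} [Fintype V] {G C : SimpleGraph V} {S : Set V} {u : V} (w : Sym2 V → ℕ)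

lemma le_wmax_of_pending (hCG : C ≤ G) (hC : ∀ ⦃a b⦄, C.Adj a b → a ∈ S ∨ a = u) :
    max (wmax (deleteVerts G S) w + wmax (deleteVerts C {u}) w)
        (wmax (deleteVerts (deleteVerts G S) {u}) w + wmax C w) ≤ wmax G w := by
  refine max_le (wmax_add_wmax_le w (deleteVerts_le G S) ((deleteVerts_le C {u}).trans hCG)
    (Set.disjoint_left.2 ?_))
    (wmax_add_wmax_le w ((deleteVerts_le _ _).trans (deleteVerts_le G S)) hCG
      (Set.disjoint_left.2 ?_))
  · rintro v ⟨x, hx⟩ ⟨y, hy⟩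
    exact (hC hy.1).elim hx.2.1 hy.2.1
  · rintro v ⟨x, hx⟩ ⟨y, hy⟩
    exact (hC hy).elim hx.1.2.1 hx.2.1

lemma wmax_le_of_pending (hpend : ∀ ⦃a b⦄, G.Adj a b → a ∈ S → C.Adj a b) :
    wmax G w ≤ max (wmax (deleteVerts G S) w + wmax (deleteVerts C {u}) w)
        (wmax (deleteVerts (deleteVerts G S) {u}) w + wmax C w) := by
  classical
  refine wmax_le fun M hM => ?_
  set MC := {e ∈ M | ∃ v ∈ e, v ∈ S}
  set MO := {e ∈ M | ¬∃ v ∈ e, v ∈ S}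
  have hMC : ∀ e ∈ MC, e ∈ C.edgeSet := by
    intro e he
    obtain ⟨heM, v, hv, hvS⟩ := Finset.mem_filter.1 he
    have hab := hM.1 e heM
    induction e with
    | h a b =>
      rcases Sym2.mem_iff.1 hv with rfl | rfl
      exacts [hpend hab hvS, (hpend hab.symm hvS).symm]
  have hMO : ∀ e ∈ MO, e ∈ (deleteVerts G S).edgeSet := fun e he =>
    have he := Finset.mem_filter.1 he
    mem_deleteVerts_edgeSet.2 ⟨hM.1 e he.1, fun v hv hvS => he.2 ⟨v, hv, hvS⟩⟩
  rw [← Finset.sum_filter_add_sum_filter_not M (fun e => ∃ v ∈ e, v ∈ S)]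
  by_cases hu : ∃ e ∈ MO, u ∈ e
  · obtain ⟨e₀, he₀, hue₀⟩ := hu
    have hMCu : IsMatching (deleteVerts C {u}) MC := by
      refine hM.of_subset (Finset.filter_subset _ _) fun e he =>
        mem_deleteVerts_edgeSet.2 ⟨hMC e he, ?_⟩
      rintro v hv rfl
      refine hM.2 e₀ (Finset.filter_subset _ _ he₀) e (Finset.filter_subset _ _ he) ?_ v hue₀ hv
      rintro rfl
      exact (Finset.mem_filter.1 he₀).2 (Finset.mem_filter.1 he).2
    rw [add_comm]
    exact le_max_of_le_left (add_le_add
      (le_wmax (hM.of_subset (Finset.filter_subset _ _) hMO)) (le_wmax hMCu))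
  · have hMOu : IsMatching (deleteVerts (deleteVerts G S) {u}) MO :=
      hM.of_subset (Finset.filter_subset _ _) fun e he =>
        mem_deleteVerts_edgeSet.2 ⟨hMO e he, fun v hv hvu => hu ⟨e, he, hvu ▸ hv⟩⟩
    rw [add_comm]
    exact le_max_of_le_right (add_le_add (le_wmax hMOu)
      (le_wmax (hM.of_subset (Finset.filter_subset _ _) hMC)))

theorem wmax_eq_max_of_pending (hCG : C ≤ G) (hC : ∀ ⦃a b⦄, C.Adj a b → a ∈ S ∨ a = u)
    (hpend : ∀ ⦃a b⦄, G.Adj a b → a ∈ S → C.Adj a b) :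
    wmax G w = max (wmax (deleteVerts G S) w + wmax (deleteVerts C {u}) w)
        (wmax (deleteVerts (deleteVerts G S) {u}) w + wmax C w) :=
  (wmax_le_of_pending w hpend).antisymm (le_wmax_of_pending w hCG hC)

end Pending

lemma SimpleGraph.eq_or_eq_of_degree_eq_two {V : Type*} {G : SimpleGraph V} {v x y b : V}
    [Fintype (G.neighborSet v)] (hv : G.degree v = 2) (hx : G.Adj v x) (hy : G.Adj v y)
    (hxy : x ≠ y) (hb : G.Adj v b) : b = x ∨ b = y := by
  classical
  have hsub : {x, y} ⊆ G.neighborFinset v := by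
    simp [Finset.insert_subset_iff, hx, hy]
  have hcard : (G.neighborFinset v).card ≤ ({x, y} : Finset V).card := by
    rw [G.card_neighborFinset_eq_degree, hv, Finset.card_pair hxy]
  have hb' := (G.mem_neighborFinset v b).2 hb
  simpa [← Finset.eq_of_subset_of_card_le hsub hcard] using hb'

section Cycle

variable {V : Type*} {G : SimpleGraph V} {n : ℕ} {c : ℕ → V}

lemma cycleOn_adj {a b : V} :
    (cycleOn n c).Adj a b ↔ (∃ i < n, s(a, b) = s(c i, c ((i + 1) % n))) ∧ a ≠ b :=
  SimpleGraph.fromEdgeSet_adj _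

lemma cycleOn_le (hsub : ∀ i < n, G.Adj (c i) (c ((i + 1) % n))) : cycleOn n c ≤ G := by
  intro a b h
  obtain ⟨⟨i, hi, he⟩, -⟩ := cycleOn_adj.1 h
  rw [← SimpleGraph.mem_edgeSet, he]
  exact hsub i hi

lemma mem_or_eq_of_cycleOn_adj (u : V) ⦃a b : V⦄ (h : (cycleOn n c).Adj a b) :
    a ∈ c '' Set.Iio n \ {u} ∨ a = u := by
  obtain ⟨⟨i, hi, he⟩, -⟩ := cycleOn_adj.1 h
  have ha : a ∈ c '' Set.Iio n := by
    rcases Sym2.eq_iff.1 he with ⟨rfl, -⟩ | ⟨rfl, -⟩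
    exacts [⟨i, hi, rfl⟩, ⟨_, Nat.mod_lt _ (by omega), rfl⟩]
  by_cases hau : a = u
  exacts [Or.inr hau, Or.inl ⟨ha, hau⟩]

lemma cycleOn_adj_of_adj [Fintype V] [DecidableRel G.Adj] (hn : 3 ≤ n) {u : V} (hu : c 0 = u)
    (hinj : ∀ i < n, ∀ j < n, c i = c j → i = j)
    (hsub : ∀ i < n, G.Adj (c i) (c ((i + 1) % n)))
    (hdeg2 : ∀ i, 0 < i → i < n → G.degree (c i) = 2)
    ⦃a b : V⦄ (hab : G.Adj a b) (ha : a ∈ c '' Set.Iio n \ {u}) : (cycleOn n c).Adj a b := by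
  obtain ⟨⟨i, hin : i < n, rfl⟩, hiu⟩ := ha
  have hi0 : 0 < i := Nat.pos_of_ne_zero fun h => hiu (h ▸ hu)
  have hpred : (i - 1 + 1) % n = i := by rw [Nat.sub_add_cancel hi0, Nat.mod_eq_of_lt hin]
  have hprev : G.Adj (c i) (c (i - 1)) := by
    simpa [hpred] using (hsub (i - 1) (by omega)).symm
  have hne : c (i - 1) ≠ c ((i + 1) % n) := fun h => by
    have := hinj _ (by omega) _ (Nat.mod_lt _ (by omega)) h
    rcases Nat.lt_or_ge (i + 1) n with h' | h'
    · rw [Nat.mod_eq_of_lt h'] at this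
      omega
    · rw [show i + 1 = n by omega, Nat.mod_self] at this
      omega
  refine cycleOn_adj.2 ⟨?_, hab.ne⟩
  rcases G.eq_or_eq_of_degree_eq_two (hdeg2 i hi0 hin) hprev (hsub i hin) hne hab with rfl | rfl
  · exact ⟨i - 1, by omega, by rw [hpred, Sym2.eq_swap]⟩
  · exact ⟨i, hin, rfl⟩

lemma cycleReduced_eq_addPendant (G : SimpleGraph V) (n : ℕ) (c : ℕ → V) (u : V) :
    cycleReduced G n c u = addPendant (deleteVerts G (c '' Set.Iio n \ {u})) u := by
  ext (_ | a) (_ | b) <;> simp [cycleReduced, addPendant, deleteVerts]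

end Cycle

/-- Pending-cycle rule: let `C = c 0 … c (n-1)` be a cycle in `G` whose vertices all
have degree 2 in `G`, except possibly the vertex `u = c 0`. Let `G'` be obtained by
removing all of `C` except `u` and adding a fresh vertex `z` with edge `uz` of weight
`ω(C) - ω(C - u)` (all other edges keep their weights). Then
`ω(G') = ω(G) - ω(C - u)`. -/
theorem stmt10 {V : Type*} [Fintype V] [DecidableEq V] (G : SimpleGraph V)
    [DecidableRel G.Adj] (w : Sym2 V → ℕ)
    (n : ℕ) (hn : 3 ≤ n) (c : ℕ → V) (u : V) (hu : c 0 = u)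
    (hinj : ∀ i < n, ∀ j < n, c i = c j → i = j)
    (hsub : ∀ i < n, G.Adj (c i) (c ((i + 1) % n)))
    (hdeg2 : ∀ i, 0 < i → i < n → G.degree (c i) = 2) :
    wmax (cycleReduced G n c u)
        (fun e =>
          if (none : Option V) ∈ e then
            wmax (cycleOn n c) w - wmax (deleteVerts (cycleOn n c) {u}) w
          else w (e.map fun o => o.getD u)) =
      wmax G w - wmax (deleteVerts (cycleOn n c) {u}) w := by
  rw [cycleReduced_eq_addPendant]
  change wmax _ (pendantWeight w u _) = _
  rw [wmax_addPendant, wmax_eq_max_of_pending w (cycleOn_le hsub)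
    (mem_or_eq_of_cycleOn_adj u) (cycleOn_adj_of_adj hn hu hinj hsub hdeg2)]
  have := wmax_mono w (deleteVerts_le (cycleOn n c) {u})
  omega
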